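/- The formal power series B(t) = sec(t) + tan(t) satisfies B(t)·B(-t) = 1; hence the sequence of Euler zigzag numbers belongs to B_R, and B_R is closed under the Boustrophedon transform. -/

import Mathlib

open Finset PowerSeries

variable {R : Type*} [CommRing R] [Algebra ℚ R]

/-- Binomial convolution of sequences. -/
def bconv (a b : ℕ → R) : ℕ → R :=
  fun n => ∑ h ∈ range (n + 1), (n.choose h : R) * a h * b (n - h)

/-- The identity sequence (1,0,0,...). -/
def eseq : ℕ → R := fun n => if n = 0 then 1 else 0

/-- The alternating sign transform. -/
def alt (a : ℕ → R) : ℕ → R := fun n => (-1) ^ n * a n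

/-- Membership in `B_R`: `a 0 = 1` and `E(a)` is the inverse of `a`. -/
def memBR (a : ℕ → R) : Prop := a 0 = 1 ∧ bconv a (alt a) = eseq

/-- The formal power series of cosine. -/
noncomputable def cosS : PowerSeries R :=
  PowerSeries.mk fun n =>
    if n % 2 = 0 then algebraMap ℚ R ((-1) ^ (n / 2) / n.factorial) else 0

/-- The formal power series of sine. -/
noncomputable def sinS : PowerSeries R :=
  PowerSeries.mk fun n =>
    if n % 2 = 1 then algebraMap ℚ R ((-1) ^ (n / 2) / n.factorial) else 0

/-!
Binomial convolution of sequences is multiplication of their exponential generating functions,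
and `a ↦ alt a` is `A(t) ↦ A(-t)`; so `B_R` corresponds to the power series `A` with `A(0) = 1`
and `A(t)A(-t) = 1`, a set closed under multiplication. For `B = sec + tan`, multiplying
`B(t)B(-t)` by `cos² t` gives `(1 + sin t)(1 - sin t) = cos² t`, by `cos² + sin² = 1`, which
holds because its derivative vanishes.
-/

open Nat

lemma natCast_mul_algebraMap_inv (n : ℕ) (hn : n ≠ 0) :
    (n : R) * algebraMap ℚ R (n : ℚ)⁻¹ = 1 := by
  rw [← map_natCast (algebraMap ℚ R), ← map_mul, mul_inv_cancel₀ (by exact_mod_cast hn),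
    map_one]

noncomputable def egf : (ℕ → R) ≃ R⟦X⟧ where
  toFun a := mk fun n => algebraMap ℚ R (n ! : ℚ)⁻¹ * a n
  invFun A n := n ! * coeff n A
  left_inv a := by
    ext n
    simp only [coeff_mk, ← mul_assoc, natCast_mul_algebraMap_inv _ n.factorial_ne_zero, one_mul]
  right_inv A := by
    ext n
    rw [coeff_mk, ← mul_assoc, mul_comm (algebraMap ℚ R _),
      natCast_mul_algebraMap_inv _ n.factorial_ne_zero, one_mul]

lemma egf_symm_apply (A : R⟦X⟧) (n : ℕ) : egf.symm A n = n ! * coeff n A := rfl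

lemma egf_symm_mul (A B : R⟦X⟧) : egf.symm (A * B) = bconv (egf.symm A) (egf.symm B) := by
  funext n
  simp only [egf_symm_apply, bconv, coeff_mul, Nat.sum_antidiagonal_eq_sum_range_succ_mk, mul_sum]
  refine sum_congr rfl fun k hk => ?_
  rw [← Nat.choose_mul_factorial_mul_factorial (Nat.lt_succ_iff.mp (mem_range.mp hk))]
  push_cast
  ring

lemma egf_symm_rescale_neg_one (A : R⟦X⟧) : egf.symm (rescale (-1) A) = alt (egf.symm A) := by
  funext n
  simp only [egf_symm_apply, alt, coeff_rescale]
  ring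

lemma egf_symm_one : egf.symm (1 : R⟦X⟧) = eseq := by
  funext n
  by_cases hn : n = 0 <;> simp [egf_symm_apply, eseq, coeff_one, hn]

lemma memBR_egf_symm_iff (A : R⟦X⟧) :
    memBR (egf.symm A) ↔ constantCoeff A = 1 ∧ A * rescale (-1) A = 1 := by
  rw [memBR, ← egf_symm_rescale_neg_one, ← egf_symm_mul, ← egf_symm_one,
    egf.symm.injective.eq_iff, egf_symm_apply, ← coeff_zero_eq_constantCoeff_apply]
  simp

lemma memBR.bconv {a b : ℕ → R} (ha : memBR a) (hb : memBR b) : memBR (bconv a b) := by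
  rw [← egf.symm_apply_apply a, memBR_egf_symm_iff] at ha
  rw [← egf.symm_apply_apply b, memBR_egf_symm_iff] at hb
  rw [← egf.symm_apply_apply a, ← egf.symm_apply_apply b, ← egf_symm_mul, memBR_egf_symm_iff,
    map_mul, map_mul, ha.1, hb.1, one_mul]
  refine ⟨rfl, ?_⟩
  calc egf a * egf b * (rescale (-1) (egf a) * rescale (-1) (egf b))
      = (egf a * rescale (-1) (egf a)) * (egf b * rescale (-1) (egf b)) := by ring
    _ = 1 := by rw [ha.2, hb.2, one_mul]

lemma constantCoeff_cosS : constantCoeff (cosS : R⟦X⟧) = 1 := by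
  simp [← coeff_zero_eq_constantCoeff_apply, cosS]

lemma constantCoeff_sinS : constantCoeff (sinS : R⟦X⟧) = 0 := by
  simp [← coeff_zero_eq_constantCoeff_apply, sinS]

lemma isUnit_cosS : IsUnit (cosS : R⟦X⟧) :=
  isUnit_iff_constantCoeff.mpr (by rw [constantCoeff_cosS]; exact isUnit_one)

lemma rescale_neg_one_cosS : rescale (-1) (cosS : R⟦X⟧) = cosS := by
  ext n
  rw [coeff_rescale]
  by_cases h : n % 2 = 0
  · simp [cosS, h, (Nat.even_iff.mpr h).neg_one_pow]
  · simp [cosS, h]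

lemma rescale_neg_one_sinS : rescale (-1) (sinS : R⟦X⟧) = -sinS := by
  ext n
  rw [coeff_rescale]
  by_cases h : n % 2 = 1
  · simp [sinS, h, (Nat.odd_iff.mpr h).neg_one_pow]
  · simp [sinS, h]

lemma algebraMap_div_factorial_succ_mul (q : ℚ) (n : ℕ) :
    algebraMap ℚ R (q / (n + 1)!) * ((n : R) + 1) = algebraMap ℚ R (q / n !) := by
  rw [← map_natCast (algebraMap ℚ R), ← map_one (algebraMap ℚ R), ← map_add, ← map_mul,
    Nat.factorial_succ]
  congr 1
  push_cast
  field_simp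

lemma derivative_sinS : d⁄dX R (sinS : R⟦X⟧) = cosS := by
  ext n
  rw [coeff_derivative]
  by_cases h : n % 2 = 0
  · have hsucc : (n + 1) % 2 = 1 := by omega
    have hhalf : (n + 1) / 2 = n / 2 := by omega
    simp only [sinS, cosS, coeff_mk, if_pos h, if_pos hsucc, hhalf]
    exact algebraMap_div_factorial_succ_mul _ n
  · have hsucc : (n + 1) % 2 ≠ 1 := by omega
    simp [sinS, cosS, h, hsucc]

lemma derivative_cosS : d⁄dX R (cosS : R⟦X⟧) = -sinS := by
  ext n
  rw [coeff_derivative, map_neg]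
  by_cases h : n % 2 = 1
  · have hsucc : (n + 1) % 2 = 0 := by omega
    have hhalf : (n + 1) / 2 = n / 2 + 1 := by omega
    simp only [sinS, cosS, coeff_mk, if_pos h, if_pos hsucc, hhalf, pow_succ, mul_neg_one, neg_div,
      map_neg, neg_mul]
    rw [algebraMap_div_factorial_succ_mul]
  · have hsucc : (n + 1) % 2 ≠ 0 := by omega
    simp [sinS, cosS, h, hsucc]

theorem cosS_sq_add_sinS_sq : (cosS ^ 2 + sinS ^ 2 : R⟦X⟧) = 1 := by
  have : IsAddTorsionFree R := .of_module_rat R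
  refine derivative.ext ?_ ?_
  · simp only [map_add, Derivation.leibniz_pow, derivative_cosS, derivative_sinS, derivative_one]
    simp only [nsmul_eq_mul, smul_eq_mul]
    ring
  · simp [constantCoeff_cosS, constantCoeff_sinS]

theorem sec_add_tan_mul_rescale_neg_one {S T : R⟦X⟧} (hsec : cosS * S = 1)
    (htan : cosS * T = sinS) :
    (S + T) * rescale (-1) (S + T) = 1 := by
  have hsec' : cosS * rescale (-1) S = 1 := by
    simpa only [map_mul, map_one, rescale_neg_one_cosS] using congrArg (rescale (-1)) hsec
  have htan' : cosS * rescale (-1) T = -sinS := by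
    simpa only [map_mul, rescale_neg_one_cosS, rescale_neg_one_sinS] using
      congrArg (rescale (-1)) htan
  refine (isUnit_cosS.pow 2).mul_left_cancel ?_
  calc cosS ^ 2 * ((S + T) * rescale (-1) (S + T))
      = (cosS * S + cosS * T) * (cosS * rescale (-1) S + cosS * rescale (-1) T) := by
        rw [map_add]; ring
    _ = 1 - sinS ^ 2 := by rw [hsec, htan, hsec', htan']; ring
    _ = cosS ^ 2 * 1 := by linear_combination -(cosS_sq_add_sinS_sq (R := R))

lemma constantCoeff_sec_add_tan {S T : R⟦X⟧} (hsec : cosS * S = 1) (htan : cosS * T = sinS) :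
    constantCoeff (S + T) = 1 := by
  have hS := congrArg constantCoeff hsec
  have hT := congrArg constantCoeff htan
  simp only [map_mul, map_one, constantCoeff_cosS, constantCoeff_sinS, one_mul] at hS hT
  rw [map_add, hS, hT, add_zero]

/-- If `S = sec` and `T = tan` (i.e. `cos·S = 1`, `cos·T = sin`), then
`B = sec + tan` satisfies `B(t)B(-t) = 1`; hence the Euler zigzag numbers
`β_n = n!·(coefficient of tⁿ in B)` lie in `B_R`, and `B_R` is closed under the
Boustrophedon transform `a ↦ β ⋆ a`. -/
theorem sec_add_tan_mem_BR (S T : PowerSeries R)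
    (hsec : cosS * S = 1) (htan : cosS * T = sinS) :
    (S + T) * PowerSeries.rescale (-1) (S + T) = 1 ∧
    memBR (fun n => (n.factorial : R) * PowerSeries.coeff (R := R) n (S + T)) ∧
    (∀ a : ℕ → R, memBR a →
      memBR (bconv (fun n => (n.factorial : R) * PowerSeries.coeff (R := R) n (S + T)) a)) := by
  have hB := sec_add_tan_mul_rescale_neg_one hsec htan
  have hβ : memBR (egf.symm (S + T)) :=
    (memBR_egf_symm_iff _).mpr ⟨constantCoeff_sec_add_tan hsec htan, hB⟩
  exact ⟨hB, hβ, fun a ha => hβ.bconv ha⟩
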